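/- Let (S_ξ)_{ξ∈Ξ} be a nondegenerate family of nonzero symmetric gauges in ℝ^N. Then for every nonzero y ∈ ℝ^N one has h_{S_ξ}(y) > 0 for every ξ ∈ Ξ, and the set S_y := ⋂_{ξ∈Ξ} (1/h_{S_ξ}(y))·S_ξ is absorbing: for every z ∈ ℝ^N there exists α > 0 with α·z ∈ S_y. -/

import Mathlib

open Pointwise

/-- The support function `h_K(x) = sup{⟨x, y⟩ : y ∈ K}` of `K ⊆ ℝ^N`. -/
noncomputable def suppFn {N : ℕ} (K : Set (EuclideanSpace ℝ (Fin N)))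
    (x : EuclideanSpace ℝ (Fin N)) : ℝ :=
  sSup ((fun y => (inner ℝ x y : ℝ)) '' K)

/-- A gauge in `ℝ^N`: a compact convex set containing the origin. -/
def IsGauge {N : ℕ} (K : Set (EuclideanSpace ℝ (Fin N))) : Prop :=
  IsCompact K ∧ Convex ℝ K ∧ (0 : EuclideanSpace ℝ (Fin N)) ∈ K

/-- A family of gauges is nondegenerate if `sup_ξ ‖A‖_{S_ξ} < +∞` for every
linear operator `A` on `ℝ^N`, i.e. there is `C` such that for each `ξ` and each
`x ∈ S ξ` the gauge value `‖A x‖_{S ξ} = inf{β > 0 : A x ∈ β • S ξ}` is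
attained below `C`. -/
def Nondegenerate {N : ℕ} {Ξ : Type*}
    (S : Ξ → Set (EuclideanSpace ℝ (Fin N))) : Prop :=
  ∀ A : EuclideanSpace ℝ (Fin N) →ₗ[ℝ] EuclideanSpace ℝ (Fin N),
    ∃ C : ℝ, ∀ ξ, ∀ x ∈ S ξ, ∃ β : ℝ, 0 < β ∧ β ≤ C ∧ A x ∈ β • S ξ

/-- Closedness of a collection of (nonempty compact) subsets of `ℝ^N` in the
topology of the Hausdorff metric. -/
def IsHausdorffClosed {N : ℕ} (C : Set (Set (EuclideanSpace ℝ (Fin N)))) : Prop :=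
  IsClosed {K : TopologicalSpace.NonemptyCompacts (EuclideanSpace ℝ (Fin N)) |
    (K : Set (EuclideanSpace ℝ (Fin N))) ∈ C}

/-- `π↑(F)`: the least Hausdorff-closed cone of gauges containing `F` that is
closed under the join `K ∨ L = conv (K ∪ L)`. -/
def piUp {N : ℕ} (F : Set (Set (EuclideanSpace ℝ (Fin N)))) :
    Set (Set (EuclideanSpace ℝ (Fin N))) :=
  ⋂₀ {C | (∀ K ∈ C, IsGauge K) ∧ IsHausdorffClosed C ∧ F ⊆ C ∧
      (∀ K ∈ C, ∀ L ∈ C, K + L ∈ C) ∧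
      (∀ K ∈ C, ∀ α : ℝ, 0 ≤ α → α • K ∈ C) ∧
      (∀ K ∈ C, ∀ L ∈ C, convexHull ℝ (K ∪ L) ∈ C)}

/-- `π↓(F)`: the least Hausdorff-closed cone of gauges containing `F` that is
closed under the meet `K ∧ L = K ∩ L`. -/
def piDown {N : ℕ} (F : Set (Set (EuclideanSpace ℝ (Fin N)))) :
    Set (Set (EuclideanSpace ℝ (Fin N))) :=
  ⋂₀ {C | (∀ K ∈ C, IsGauge K) ∧ IsHausdorffClosed C ∧ F ⊆ C ∧
      (∀ K ∈ C, ∀ L ∈ C, K + L ∈ C) ∧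
      (∀ K ∈ C, ∀ α : ℝ, 0 ≤ α → α • K ∈ C) ∧
      (∀ K ∈ C, ∀ L ∈ C, K ∩ L ∈ C)}

/-- `π(F)`: the least Hausdorff-closed cone of gauges containing `F` that is
closed under both the join and the meet. -/
def piBoth {N : ℕ} (F : Set (Set (EuclideanSpace ℝ (Fin N)))) :
    Set (Set (EuclideanSpace ℝ (Fin N))) :=
  ⋂₀ {C | (∀ K ∈ C, IsGauge K) ∧ IsHausdorffClosed C ∧ F ⊆ C ∧
      (∀ K ∈ C, ∀ L ∈ C, K + L ∈ C) ∧
      (∀ K ∈ C, ∀ α : ℝ, 0 ≤ α → α • K ∈ C) ∧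
      (∀ K ∈ C, ∀ L ∈ C, convexHull ℝ (K ∪ L) ∈ C) ∧
      (∀ K ∈ C, ∀ L ∈ C, K ∩ L ∈ C)}

/-! Both claims come from applying nondegeneracy to rank-one operators. For `x ∈ S ξ` nonzero,
`v ↦ ⟪x, v⟫ • y` puts a positive multiple `c • y` into `S ξ`, so `h_{S ξ}(y) ≥ c ‖y‖² > 0`.
For `z`, the operator `v ↦ ⟪y, v⟫ • z`, evaluated at a point of `S ξ` where `⟪y, ·⟫` attains
`h_{S ξ}(y)`, gives `h_{S ξ}(y) • z ∈ C • S ξ` with `C` independent of `ξ`, so `C⁻¹ • z` lies in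
every `(1 / h_{S ξ}(y)) • S ξ`. -/

theorem StarConvex.smul_set_subset_smul_set {𝕜 E : Type*} [Field 𝕜] [LinearOrder 𝕜]
    [IsStrictOrderedRing 𝕜] [AddCommGroup E] [Module 𝕜 E] {s : Set E}
    (hs : StarConvex 𝕜 0 s) {a b : 𝕜} (ha : 0 < a) (hab : a ≤ b) : a • s ⊆ b • s := by
  rintro _ ⟨x, hx, rfl⟩
  have hb : 0 < b := ha.trans_le hab
  refine ⟨(a / b) • x, hs.smul_mem hx (div_nonneg ha.le hb.le) ((div_le_one hb).2 hab), ?_⟩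
  show b • (a / b) • x = a • x
  rw [smul_smul, mul_div_cancel₀ _ hb.ne']

section SupportFunction

variable {N : ℕ} {K : Set (EuclideanSpace ℝ (Fin N))}

theorem IsCompact.inner_le_suppFn (hK : IsCompact K) (y : EuclideanSpace ℝ (Fin N))
    {x : EuclideanSpace ℝ (Fin N)} (hx : x ∈ K) : inner ℝ y x ≤ suppFn K y :=
  le_csSup ((hK.image (continuous_const.inner continuous_id)).bddAbove) ⟨x, hx, rfl⟩

theorem IsCompact.exists_inner_eq_suppFn (hK : IsCompact K) (hne : K.Nonempty)
    (y : EuclideanSpace ℝ (Fin N)) : ∃ x ∈ K, inner ℝ y x = suppFn K y :=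
  (hK.image (continuous_const.inner continuous_id)).sSup_mem (hne.image _)

end SupportFunction

namespace Nondegenerate

variable {N : ℕ} {Ξ : Type*} {S : Ξ → Set (EuclideanSpace ℝ (Fin N))}

theorem exists_pos_forall_map_mem_smul (hnd : Nondegenerate S)
    (hS : ∀ ξ, StarConvex ℝ 0 (S ξ))
    (A : EuclideanSpace ℝ (Fin N) →ₗ[ℝ] EuclideanSpace ℝ (Fin N)) :
    ∃ C : ℝ, 0 < C ∧ ∀ ξ, ∀ x ∈ S ξ, A x ∈ C • S ξ := by
  obtain ⟨C, hC⟩ := hnd A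
  refine ⟨max C 1, one_pos.trans_le (le_max_right _ _), fun ξ x hx => ?_⟩
  obtain ⟨β, hβ, hβC, hAx⟩ := hC ξ x hx
  exact (hS ξ).smul_set_subset_smul_set hβ (hβC.trans (le_max_left _ _)) hAx

theorem exists_pos_smul_mem (hnd : Nondegenerate S) {ξ : Ξ} (hS : (S ξ).Nontrivial)
    (y : EuclideanSpace ℝ (Fin N)) : ∃ c : ℝ, 0 < c ∧ c • y ∈ S ξ := by
  obtain ⟨x, hx, hx0⟩ := hS.exists_ne 0
  obtain ⟨C, hC⟩ := hnd ((innerₗ _ x).smulRight y)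
  obtain ⟨β, hβ, -, hxy⟩ := hC ξ x hx
  rw [LinearMap.smulRight_apply, innerₗ_apply_apply,
    Set.mem_smul_set_iff_inv_smul_mem₀ hβ.ne', smul_smul] at hxy
  exact ⟨_, mul_pos (inv_pos.2 hβ) (real_inner_self_pos.2 hx0), hxy⟩

theorem suppFn_pos (hnd : Nondegenerate S) {ξ : Ξ} (hK : IsCompact (S ξ))
    (hS : (S ξ).Nontrivial) {y : EuclideanSpace ℝ (Fin N)} (hy : y ≠ 0) :
    0 < suppFn (S ξ) y := by
  obtain ⟨c, hc, hcy⟩ := hnd.exists_pos_smul_mem hS y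
  calc 0 < c * inner ℝ y y := mul_pos hc (real_inner_self_pos.2 hy)
    _ = inner ℝ y (c • y) := (real_inner_smul_right _ _ _).symm
    _ ≤ suppFn (S ξ) y := hK.inner_le_suppFn y hcy

end Nondegenerate

theorem nondegenerate_inf_absorbing_general {N : ℕ} {Ξ : Type*}
    (S : Ξ → Set (EuclideanSpace ℝ (Fin N)))
    (hg : ∀ ξ, IsGauge (S ξ))
    (hnz : ∀ ξ, S ξ ≠ {0})
    (hnd : Nondegenerate S)
    (y : EuclideanSpace ℝ (Fin N)) (hy : y ≠ 0) :
    (∀ ξ, 0 < suppFn (S ξ) y) ∧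
    (∀ z : EuclideanSpace ℝ (Fin N), ∃ α : ℝ, 0 < α ∧
      α • z ∈ ⋂ ξ, (1 / suppFn (S ξ) y) • S ξ) := by
  have hpos : ∀ ξ, 0 < suppFn (S ξ) y := fun ξ =>
    hnd.suppFn_pos (hg ξ).1 ((Set.nontrivial_iff_ne_singleton (hg ξ).2.2).2 (hnz ξ)) hy
  refine ⟨hpos, fun z => ?_⟩
  obtain ⟨C, hC, hAC⟩ := hnd.exists_pos_forall_map_mem_smul
    (fun ξ => (hg ξ).2.1.starConvex (hg ξ).2.2) ((innerₗ _ y).smulRight z)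
  refine ⟨C⁻¹, inv_pos.2 hC, Set.mem_iInter.2 fun ξ => ?_⟩
  obtain ⟨x, hx, hxy⟩ := (hg ξ).1.exists_inner_eq_suppFn ⟨0, (hg ξ).2.2⟩ y
  have hz := hAC ξ x hx
  rw [LinearMap.smulRight_apply, innerₗ_apply_apply, hxy,
    Set.mem_smul_set_iff_inv_smul_mem₀ hC.ne'] at hz
  rw [one_div, Set.mem_smul_set_iff_inv_smul_mem₀ (inv_ne_zero (hpos ξ).ne'), inv_inv,
    smul_comm]
  exact hz

/-- For a nondegenerate family of nonzero symmetric gauges `(S ξ)` in `ℝ^N` and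
every nonzero `y`, one has `h_{S ξ}(y) > 0` for every `ξ`, and the set
`S_y = ⋂_ξ (1/h_{S ξ}(y)) • S ξ` is absorbing. -/
theorem nondegenerate_inf_absorbing {N : ℕ} {Ξ : Type*}
    (S : Ξ → Set (EuclideanSpace ℝ (Fin N)))
    (hg : ∀ ξ, IsGauge (S ξ))
    (hnz : ∀ ξ, S ξ ≠ {0})
    (hsymm : ∀ ξ, S ξ = -S ξ)
    (hnd : Nondegenerate S)
    (y : EuclideanSpace ℝ (Fin N)) (hy : y ≠ 0) :
    (∀ ξ, 0 < suppFn (S ξ) y) ∧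
    (∀ z : EuclideanSpace ℝ (Fin N), ∃ α : ℝ, 0 < α ∧
      α • z ∈ ⋂ ξ, (1 / suppFn (S ξ) y) • S ξ) :=
  nondegenerate_inf_absorbing_general S hg hnz hnd y hy
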